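/- arXiv:2207.03152 — 4 statements merged into one kernel-verified Lean document; each statement's English description precedes it below -/
import Mathlib

section
/- For every real k > 0, d > 0, α ∈ [0,1), and β = √(1−α²), the function R(s) = √(s²+k²)·tanh(d·√(s²+k²)) + α·s^{3/2} − β·k²/√s has exactly one root s > 0 on (0,∞). -/
open Real

lemma tanh_formula (x : ℝ) : Real.tanh x = 1 - 2 / (Real.exp (2 * x) + 1) := by
  have he : Real.exp x ≠ 0 := (Real.exp_pos x).ne'
  have he1 : Real.exp (2 * x) + 1 ≠ 0 := by positivity
  have hc : Real.exp x + Real.exp (-x) ≠ 0 := by positivity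
  rw [Real.tanh_eq_sinh_div_cosh, Real.sinh_eq, Real.cosh_eq]
  rw [Real.exp_neg] at hc ⊢
  rw [show (2:ℝ) * x = x + x by ring, Real.exp_add] at he1 ⊢
  field_simp
  ring

lemma tanh_strictMono : StrictMono Real.tanh := by
  intro x y hxy
  rw [tanh_formula, tanh_formula]
  have h1 : (0:ℝ) < Real.exp (2 * x) + 1 := by positivity
  have h2 : Real.exp (2 * x) + 1 < Real.exp (2 * y) + 1 := by
    have := Real.exp_lt_exp.mpr (by linarith : 2 * x < 2 * y)
    linarith
  have : 2 / (Real.exp (2 * y) + 1) < 2 / (Real.exp (2 * x) + 1) :=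
    div_lt_div_of_pos_left (by norm_num) h1 h2
  linarith

lemma tanh_pos' {x : ℝ} (hx : 0 < x) : 0 < Real.tanh x := by
  have := tanh_strictMono hx
  rwa [Real.tanh_zero] at this

lemma continuous_tanh' : Continuous Real.tanh := by
  have : Real.tanh = fun x => Real.sinh x / Real.cosh x := by
    funext x; exact Real.tanh_eq_sinh_div_cosh x
  rw [this]
  exact Real.continuous_sinh.div Real.continuous_cosh fun x => (Real.cosh_pos x).ne'

theorem stmt_0 (k d α : ℝ) (hk : 0 < k) (hd : 0 < d) (hα0 : 0 ≤ α) (hα1 : α < 1)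
    (β : ℝ) (hβ : β = Real.sqrt (1 - α ^ 2)) :
    ∃! s : ℝ, 0 < s ∧
      Real.sqrt (s ^ 2 + k ^ 2) * Real.tanh (d * Real.sqrt (s ^ 2 + k ^ 2))
        + α * s ^ ((3 : ℝ) / 2) - β * k ^ 2 / Real.sqrt s = 0 := by
  set G : ℝ → ℝ := fun s =>
    Real.sqrt s * (Real.sqrt (s ^ 2 + k ^ 2) * Real.tanh (d * Real.sqrt (s ^ 2 + k ^ 2)))
      + α * s ^ 2 - β * k ^ 2 with hG
  have hβpos : 0 < β := by
    rw [hβ]; apply Real.sqrt_pos.mpr; nlinarith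
  -- relation between R and G
  have hrel : ∀ s : ℝ, 0 < s →
      (Real.sqrt (s ^ 2 + k ^ 2) * Real.tanh (d * Real.sqrt (s ^ 2 + k ^ 2))
        + α * s ^ ((3 : ℝ) / 2) - β * k ^ 2 / Real.sqrt s = 0 ↔ G s = 0) := by
    intro s hs
    have hsq : 0 < Real.sqrt s := Real.sqrt_pos.mpr hs
    have hmul : Real.sqrt s * (s ^ ((3 : ℝ) / 2)) = s ^ 2 := by
      rw [Real.sqrt_eq_rpow, ← Real.rpow_add hs]
      norm_num
    have hdiv : Real.sqrt s * (β * k ^ 2 / Real.sqrt s) = β * k ^ 2 := by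
      rw [mul_comm, div_mul_cancel₀ _ hsq.ne']
    have key : Real.sqrt s * (Real.sqrt (s ^ 2 + k ^ 2) * Real.tanh (d * Real.sqrt (s ^ 2 + k ^ 2))
        + α * s ^ ((3 : ℝ) / 2) - β * k ^ 2 / Real.sqrt s) = G s := by
      rw [mul_sub, mul_add, hdiv,
        show Real.sqrt s * (α * s ^ ((3:ℝ)/2)) = α * s ^ 2 by rw [← hmul]; ring]
    constructor
    · intro h
      rw [← key, h, mul_zero]
    · intro h
      rw [← key] at h
      exact (mul_eq_zero.mp h).resolve_left hsq.ne'
  -- strict monotonicity of G on Ici 0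
  have hmono : StrictMonoOn G (Set.Ici 0) := by
    intro a ha b hb hab
    simp only [Set.mem_Ici] at ha hb
    have hb0 : 0 < b := lt_of_le_of_lt ha hab
    have hs1 : Real.sqrt a < Real.sqrt b := Real.sqrt_lt_sqrt ha hab
    have hu : Real.sqrt (a ^ 2 + k ^ 2) < Real.sqrt (b ^ 2 + k ^ 2) := by
      apply Real.sqrt_lt_sqrt (by positivity)
      nlinarith
    have hua : k ≤ Real.sqrt (a ^ 2 + k ^ 2) := by
      have h := Real.sqrt_le_sqrt (show k ^ 2 ≤ a ^ 2 + k ^ 2 by nlinarith)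
      rwa [Real.sqrt_sq hk.le] at h
    have huapos : 0 < Real.sqrt (a ^ 2 + k ^ 2) := lt_of_lt_of_le hk hua
    have hubpos : 0 < Real.sqrt (b ^ 2 + k ^ 2) := huapos.trans hu
    have htan : Real.tanh (d * Real.sqrt (a ^ 2 + k ^ 2)) <
        Real.tanh (d * Real.sqrt (b ^ 2 + k ^ 2)) :=
      tanh_strictMono (by nlinarith)
    have htanpos : 0 < Real.tanh (d * Real.sqrt (a ^ 2 + k ^ 2)) :=
      tanh_pos' (by positivity)
    have hHa : Real.sqrt (a ^ 2 + k ^ 2) * Real.tanh (d * Real.sqrt (a ^ 2 + k ^ 2)) <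
        Real.sqrt (b ^ 2 + k ^ 2) * Real.tanh (d * Real.sqrt (b ^ 2 + k ^ 2)) := by
      nlinarith
    have hHapos : 0 < Real.sqrt (a ^ 2 + k ^ 2) * Real.tanh (d * Real.sqrt (a ^ 2 + k ^ 2)) := by
      positivity
    have hprod : Real.sqrt a * (Real.sqrt (a ^ 2 + k ^ 2) * Real.tanh (d * Real.sqrt (a ^ 2 + k ^ 2))) <
        Real.sqrt b * (Real.sqrt (b ^ 2 + k ^ 2) * Real.tanh (d * Real.sqrt (b ^ 2 + k ^ 2))) := by
      have h0 : 0 ≤ Real.sqrt a := Real.sqrt_nonneg a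
      nlinarith
    have hsq2 : α * a ^ 2 ≤ α * b ^ 2 :=
      mul_le_mul_of_nonneg_left (by nlinarith) hα0
    simp only [hG]
    linarith
  -- continuity of G
  have hcont : Continuous G := by
    apply Continuous.sub
    apply Continuous.add
    · exact Real.continuous_sqrt.mul
        (((continuous_pow 2).add continuous_const).sqrt.mul
          (continuous_tanh'.comp (continuous_const.mul
            ((continuous_pow 2).add continuous_const).sqrt)))
    · exact continuous_const.mul (continuous_pow 2)
    · exact continuous_const
  -- G 0 < 0
  have hG0 : G 0 < 0 := by
    simp only [hG, Real.sqrt_zero, zero_mul, ne_eq, OfNat.ofNat_ne_zero,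
      not_false_eq_true, zero_pow, mul_zero, add_zero, zero_add, zero_sub, neg_lt_zero]
    positivity
  -- G T > 0 for large T
  set c := Real.tanh (d * k) with hc
  have hcpos : 0 < c := tanh_pos' (by positivity)
  set T := max 1 (β * k ^ 2 / c + 1) with hT
  have hT1 : (1:ℝ) ≤ T := le_max_left _ _
  have hT0 : 0 < T := by linarith
  have hGT : 0 < G T := by
    have hsT : 1 ≤ Real.sqrt T := by
      rw [show (1:ℝ) = Real.sqrt 1 by simp]; exact Real.sqrt_le_sqrt hT1
    have h1 : T ≤ Real.sqrt (T ^ 2 + k ^ 2) := by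
      have h := Real.sqrt_le_sqrt (show T ^ 2 ≤ T ^ 2 + k ^ 2 by nlinarith)
      rwa [Real.sqrt_sq hT0.le] at h
    have h2 : c ≤ Real.tanh (d * Real.sqrt (T ^ 2 + k ^ 2)) := by
      apply (tanh_strictMono.le_iff_le).mpr
      have h := Real.sqrt_le_sqrt (show k ^ 2 ≤ T ^ 2 + k ^ 2 by nlinarith)
      rw [Real.sqrt_sq hk.le] at h
      nlinarith
    have h3 : β * k ^ 2 / c + 1 ≤ T := le_max_right _ _
    have h4 : β * k ^ 2 < T * c := by
      rw [div_add' _ _ _ hcpos.ne'] at h3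
      rw [div_le_iff₀ hcpos] at h3
      nlinarith
    have h5 : T * c ≤ Real.sqrt T * (Real.sqrt (T ^ 2 + k ^ 2) *
        Real.tanh (d * Real.sqrt (T ^ 2 + k ^ 2))) := by
      have hB0 : 0 ≤ Real.sqrt (T ^ 2 + k ^ 2) := Real.sqrt_nonneg _
      have hTle : T ≤ Real.sqrt T * Real.sqrt (T ^ 2 + k ^ 2) := by
        calc T ≤ Real.sqrt (T ^ 2 + k ^ 2) := h1
        _ = 1 * Real.sqrt (T ^ 2 + k ^ 2) := by ring
        _ ≤ Real.sqrt T * Real.sqrt (T ^ 2 + k ^ 2) :=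
          mul_le_mul_of_nonneg_right hsT hB0
      calc T * c ≤ (Real.sqrt T * Real.sqrt (T ^ 2 + k ^ 2)) * c :=
          mul_le_mul_of_nonneg_right hTle hcpos.le
      _ ≤ (Real.sqrt T * Real.sqrt (T ^ 2 + k ^ 2)) *
          Real.tanh (d * Real.sqrt (T ^ 2 + k ^ 2)) :=
          mul_le_mul_of_nonneg_left h2 (by positivity)
      _ = Real.sqrt T * (Real.sqrt (T ^ 2 + k ^ 2) *
          Real.tanh (d * Real.sqrt (T ^ 2 + k ^ 2))) := by ring
    have h6 : 0 ≤ α * T ^ 2 := by positivity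
    simp only [hG]
    linarith
  -- existence via IVT
  obtain ⟨s, hsmem, hsval⟩ : ∃ s ∈ Set.Ioo (0:ℝ) T, G s = 0 := by
    have := intermediate_value_Ioo (le_of_lt hT0) hcont.continuousOn
    have hmem : (0:ℝ) ∈ Set.Ioo (G 0) (G T) := ⟨hG0, hGT⟩
    obtain ⟨s, hs, hval⟩ := this hmem
    exact ⟨s, hs, hval⟩
  refine ⟨s, ⟨hsmem.1, (hrel s hsmem.1).mpr hsval⟩, ?_⟩
  rintro t ⟨ht, htval⟩
  have htG : G t = 0 := (hrel t ht).mp htval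
  exact hmono.injOn (Set.mem_Ici.mpr ht.le) (Set.mem_Ici.mpr hsmem.1.le)
    (by rw [htG, hsval])
end

section
/- Let α ∈ (0,1), β = √(1−α²), d > 0, and k > (8α+2β)/(9(αβ)^{3/2}). Then R(k·√(β/α)) > 0, where R(s) = √(s²+k²)·tanh(d√(s²+k²)) + α s^{3/2} − β k²/√s. -/
/-! At `s = k √(β/α)` one has `α s² = β k²`, i.e. `α s^{3/2} = β k² / √s`, so the two power terms
of `R` cancel and `R(s) = √(s² + k²) · tanh (d √(s² + k²))`, which is positive. -/

open Real

lemma tanh_pos_of_pos {x : ℝ} (hx : 0 < x) : 0 < tanh x := by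
  rw [tanh_eq_sinh_div_cosh]
  exact div_pos (sinh_pos_iff.mpr hx) (cosh_pos x)

lemma rpow_three_halves_mul_sqrt {s : ℝ} (hs : 0 < s) : s ^ ((3 : ℝ) / 2) * √s = s ^ 2 := by
  rw [sqrt_eq_rpow, ← rpow_add hs, ← rpow_natCast s 2]
  norm_num

lemma mul_rpow_three_halves_eq_div_sqrt {α β k : ℝ} (hα : 0 < α) (hβ : 0 < β) (hk : 0 < k) :
    α * (k * √(β / α)) ^ ((3 : ℝ) / 2) = β * k ^ 2 / √(k * √(β / α)) := by
  have hs : 0 < k * √(β / α) := by positivity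
  have hsq : (k * √(β / α)) ^ 2 = k ^ 2 * (β / α) := by
    rw [mul_pow, sq_sqrt (by positivity)]
  rw [eq_div_iff (by positivity), mul_assoc, rpow_three_halves_mul_sqrt hs, hsq]
  field_simp

theorem stmt_3 (k d α : ℝ) (hd : 0 < d) (hα0 : 0 < α) (hα1 : α < 1)
    (β : ℝ) (hβ : β = Real.sqrt (1 - α ^ 2))
    (hk : k > (8 * α + 2 * β) / (9 * (α * β) ^ ((3 : ℝ) / 2))) :
    0 < Real.sqrt ((k * Real.sqrt (β / α)) ^ 2 + k ^ 2)
          * Real.tanh (d * Real.sqrt ((k * Real.sqrt (β / α)) ^ 2 + k ^ 2))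
        + α * (k * Real.sqrt (β / α)) ^ ((3 : ℝ) / 2)
        - β * k ^ 2 / Real.sqrt (k * Real.sqrt (β / α)) := by
  have hβ0 : 0 < β := by
    rw [hβ]
    exact sqrt_pos.mpr (by nlinarith)
  have hk0 : 0 < k := lt_trans (by positivity) hk
  rw [mul_rpow_three_halves_eq_div_sqrt hα0 hβ0 hk0, add_sub_cancel_right]
  have hr : 0 < √((k * √(β / α)) ^ 2 + k ^ 2) := by positivity
  exact mul_pos hr (tanh_pos_of_pos (mul_pos hd hr))
end

section
/- Let α ∈ (0,1), β = √(1−α²), d > 0, and k > (8α+2β)/(9(αβ)^{3/2}). Then R((k/2)·√(β/α)) < 0, where R(s) = √(s²+k²)·tanh(d√(s²+k²)) + α s^{3/2} − β k²/√s. -/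
/-!
With `t = √(β/α)` we have `α t² = β`, so `s = k t / 2` satisfies `β k² = 4 α s²` and the last
term of `R(s)` equals `4 α s^{3/2}`. Bounding `tanh` by `1` gives
`R(s) ≤ √(s² + k²) - 3 α s^{3/2}`, which is negative iff `s² + k² < 9 α² s³`; in terms of `t`
this reads `8 + 2 t² < 9 k α² t³`, i.e. (after multiplying by `α`, and as `(αβ)^{3/2} = (α t)³`)
exactly the hypothesis on `k`.
-/

open Real

lemma Real.mul_tanh_le {x : ℝ} (hx : 0 ≤ x) (y : ℝ) : x * tanh y ≤ x :=
  mul_le_of_le_one_right hx (tanh_lt_one y).le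

lemma Real.rpow_three_halves {s : ℝ} (hs : 0 ≤ s) : s ^ ((3 : ℝ) / 2) = s * √s := by
  rw [show (3 : ℝ) / 2 = 1 + 1 / 2 by norm_num, rpow_add' hs (by norm_num), rpow_one,
    ← sqrt_eq_rpow]

lemma Real.sq_rpow_three_halves {x : ℝ} (hx : 0 ≤ x) : (x ^ 2) ^ ((3 : ℝ) / 2) = x ^ 3 := by
  rw [← rpow_natCast_mul hx]
  norm_num

lemma sqrt_mul_tanh_add_sub_neg {s k d α β : ℝ} (hs : 0 < s) (hα : 0 < α)
    (hβk : β * k ^ 2 = 4 * α * s ^ 2) (hsk : s ^ 2 + k ^ 2 < 9 * α ^ 2 * s ^ 3) :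
    √(s ^ 2 + k ^ 2) * tanh (d * √(s ^ 2 + k ^ 2)) + α * s ^ ((3 : ℝ) / 2)
      - β * k ^ 2 / √s < 0 := by
  have hsqrt_s : 0 < √s := sqrt_pos.mpr hs
  have hlast : β * k ^ 2 / √s = 4 * α * (s * √s) := by
    rw [hβk, div_eq_iff hsqrt_s.ne']
    linear_combination (-4 * α * s) * mul_self_sqrt hs.le
  have hroot : √(s ^ 2 + k ^ 2) < 3 * α * (s * √s) := by
    rw [sqrt_lt' (by positivity)]
    calc s ^ 2 + k ^ 2 < 9 * α ^ 2 * s ^ 3 := hsk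
      _ = (3 * α * (s * √s)) ^ 2 := by
        linear_combination (-9 * α ^ 2 * s ^ 2) * sq_sqrt hs.le
  have htanh := mul_tanh_le (sqrt_nonneg (s ^ 2 + k ^ 2)) (d * √(s ^ 2 + k ^ 2))
  rw [rpow_three_halves hs.le, hlast]
  linarith

theorem stmt_4_general (k d α : ℝ) (hα0 : 0 < α) (hα1 : α < 1)
    (β : ℝ) (hβ : β = Real.sqrt (1 - α ^ 2))
    (hk : k > (8 * α + 2 * β) / (9 * (α * β) ^ ((3 : ℝ) / 2))) :
    Real.sqrt ((k / 2 * Real.sqrt (β / α)) ^ 2 + k ^ 2)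
          * Real.tanh (d * Real.sqrt ((k / 2 * Real.sqrt (β / α)) ^ 2 + k ^ 2))
        + α * (k / 2 * Real.sqrt (β / α)) ^ ((3 : ℝ) / 2)
        - β * k ^ 2 / Real.sqrt (k / 2 * Real.sqrt (β / α)) < 0 := by
  have hβ0 : 0 < β := hβ ▸ sqrt_pos.mpr (by nlinarith)
  set t := √(β / α)
  have ht : 0 < t := sqrt_pos.mpr (div_pos hβ0 hα0)
  have hαt : α * t ^ 2 = β := by rw [sq_sqrt (div_pos hβ0 hα0).le]; field_simp
  have hk' : 8 * α + 2 * β < 9 * k * (α * t) ^ 3 := by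
    have hpow : (α * β) ^ ((3 : ℝ) / 2) = (α * t) ^ 3 := by
      rw [← sq_rpow_three_halves (by positivity), ← hαt]; ring_nf
    rw [hpow, gt_iff_lt, div_lt_iff₀ (by positivity)] at hk
    linarith
  have hk0 : 0 < k := by nlinarith [pow_pos (mul_pos hα0 ht) 3]
  apply sqrt_mul_tanh_add_sub_neg (by positivity) hα0
  · rw [← hαt]; ring
  · rw [← hαt] at hk'
    nlinarith [mul_pos hk0 hk0, mul_pos hα0 hk0]

theorem stmt_4 (k d α : ℝ) (hd : 0 < d) (hα0 : 0 < α) (hα1 : α < 1)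
    (β : ℝ) (hβ : β = Real.sqrt (1 - α ^ 2))
    (hk : k > (8 * α + 2 * β) / (9 * (α * β) ^ ((3 : ℝ) / 2))) :
    Real.sqrt ((k / 2 * Real.sqrt (β / α)) ^ 2 + k ^ 2)
          * Real.tanh (d * Real.sqrt ((k / 2 * Real.sqrt (β / α)) ^ 2 + k ^ 2))
        + α * (k / 2 * Real.sqrt (β / α)) ^ ((3 : ℝ) / 2)
        - β * k ^ 2 / Real.sqrt (k / 2 * Real.sqrt (β / α)) < 0 :=
  stmt_4_general k d α hα0 hα1 β hβ hk
end

section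
/- Define the auxiliary state φ(t,ξ) = ∫_0^t exp(−ξ(t−τ)) r(τ) dτ for a continuous function r : [0,∞) → ℝ and ξ > 0. Then for all t ≥ 0, (1/π) ∫_0^∞ φ(t,ξ)/√ξ dξ = (1/√π) ∫_0^t r(τ)/√(t−τ) dτ, i.e., the diffusive representation equals the Riemann–Liouville half-integral of r at t. -/
/-!
Since `∫₀^∞ e^{-ξ s} ξ^{-1/2} dξ = Γ(1/2) s^{-1/2} = √π / √s` for `s > 0`, exchanging the `ξ`- and
`τ`-integrals turns the diffusive representation into `√π / π` times the half-integral. Fubini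
applies because the same computation with `|r|` in place of `r` bounds the iterated integral of the
absolute value by `√π ∫ |r τ| / √(t - τ) dτ`, which is finite for `r` bounded on `[0, t]`.
-/

open MeasureTheory Real Set

theorem integral_exp_neg_mul_div_sqrt_Ioi {s : ℝ} (hs : 0 < s) :
    ∫ ξ in Ioi 0, exp (-ξ * s) / √ξ = √π / √s := by
  have hΓ := integral_rpow_mul_exp_neg_mul_Ioi (a := 1 / 2) one_half_pos hs
  have hrpow : ∀ ξ ∈ Ioi (0 : ℝ), ξ ^ ((1 : ℝ) / 2 - 1) * exp (-(s * ξ)) = exp (-ξ * s) / √ξ := by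
    intro ξ hξ
    rw [show (1 : ℝ) / 2 - 1 = -(1 / 2) by norm_num, rpow_neg hξ.le, ← sqrt_eq_rpow]
    ring_nf
  rw [setIntegral_congr_fun measurableSet_Ioi hrpow] at hΓ
  rw [hΓ, ← sqrt_eq_rpow, Gamma_one_half_eq, one_div, sqrt_inv]
  ring

theorem integrableOn_exp_neg_mul_div_sqrt_Ioi {s : ℝ} (hs : 0 < s) :
    IntegrableOn (fun ξ => exp (-ξ * s) / √ξ) (Ioi 0) := by
  refine (integrableOn_rpow_mul_exp_neg_mul_rpow (s := -(1 / 2)) (p := 1) (by norm_num) one_pos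
    hs).congr_fun (fun ξ hξ => ?_) measurableSet_Ioi
  simp only [rpow_one, rpow_neg hξ.le, ← sqrt_eq_rpow]
  ring_nf

theorem integrableOn_div_sqrt_sub {r : ℝ → ℝ} (hr : Continuous r) {t : ℝ} (ht : 0 ≤ t) :
    IntegrableOn (fun τ => r τ / √(t - τ)) (Ioc 0 t) := by
  obtain ⟨M, hM⟩ := isCompact_Icc.exists_bound_of_continuousOn (hr.continuousOn (s := Icc 0 t))
  have hkernel : IntegrableOn (fun τ : ℝ => (t - τ) ^ (-(1 / 2) : ℝ)) (Ioc 0 t) := by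
    have h := (intervalIntegral.intervalIntegrable_rpow' (r := -(1 / 2)) (by norm_num)
      (a := 0) (b := t)).comp_sub_left t
    simp only [sub_zero, sub_self] at h
    exact (intervalIntegrable_iff_integrableOn_Ioc_of_le ht).1 h.symm
  refine (hkernel.const_mul M).mono' (hr.measurable.div (by fun_prop)).aestronglyMeasurable ?_
  refine (ae_restrict_iff' measurableSet_Ioc).2 (ae_of_all _ fun τ hτ => ?_)
  rw [norm_div, norm_of_nonneg (sqrt_nonneg _), rpow_neg (sub_nonneg.2 hτ.2), ← sqrt_eq_rpow,
    div_eq_mul_inv]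
  gcongr
  exact hM τ (Ioc_subset_Icc_self hτ)

theorem integral_Ioi_integral_exp_neg_mul_sub_div_sqrt {r : ℝ → ℝ} (hr : Measurable r) {a t : ℝ}
    (hint : IntegrableOn (fun τ => r τ / √(t - τ)) (Ioc a t)) :
    ∫ ξ in Ioi 0, (∫ τ in Ioc a t, exp (-ξ * (t - τ)) * r τ) / √ξ
      = √π * ∫ τ in Ioc a t, r τ / √(t - τ) := by
  set F : ℝ × ℝ → ℝ := fun p => exp (-p.1 * (t - p.2)) / √p.1 * r p.2
  have hlt : ∀ᵐ τ ∂volume.restrict (Ioc a t), τ < t := by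
    filter_upwards [ae_restrict_mem measurableSet_Ioc, ae_restrict_of_ae (Measure.ae_ne volume t)]
      with τ hτ hτt using lt_of_le_of_ne hτ.2 hτt
  have hsection : ∀ τ < t, ∫ ξ in Ioi 0, F (ξ, τ) = √π * (r τ / √(t - τ)) := fun τ hτ => by
    simp only [F]
    rw [integral_mul_const, integral_exp_neg_mul_div_sqrt_Ioi (sub_pos.2 hτ)]
    ring
  have hF : Integrable F ((volume.restrict (Ioi 0)).prod (volume.restrict (Ioc a t))) := by
    refine (integrable_prod_iff' (Measurable.aestronglyMeasurable (by unfold F; fun_prop))).2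
      ⟨?_, ?_⟩
    · filter_upwards [hlt] with τ hτ
      exact (integrableOn_exp_neg_mul_div_sqrt_Ioi (sub_pos.2 hτ)).mul_const (r τ)
    · refine (hint.norm.const_mul √π).congr ?_
      filter_upwards [hlt] with τ hτ
      simp only [F, norm_mul, norm_div, norm_of_nonneg (exp_pos _).le,
        norm_of_nonneg (sqrt_nonneg _), integral_mul_const,
        integral_exp_neg_mul_div_sqrt_Ioi (sub_pos.2 hτ)]
      ring
  calc ∫ ξ in Ioi 0, (∫ τ in Ioc a t, exp (-ξ * (t - τ)) * r τ) / √ξ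
      = ∫ ξ in Ioi 0, ∫ τ in Ioc a t, F (ξ, τ) := by
        simp only [F, ← integral_div, mul_div_right_comm]
    _ = ∫ τ in Ioc a t, ∫ ξ in Ioi 0, F (ξ, τ) := integral_integral_swap hF
    _ = ∫ τ in Ioc a t, √π * (r τ / √(t - τ)) := by
      refine integral_congr_ae ?_
      filter_upwards [hlt] with τ hτ using hsection τ hτ
    _ = √π * ∫ τ in Ioc a t, r τ / √(t - τ) := integral_const_mul _ _

theorem stmt_10 (r : ℝ → ℝ) (hr : Continuous r) (t : ℝ) (ht : 0 ≤ t) :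
    (1 / Real.pi) * ∫ ξ in Set.Ioi (0 : ℝ),
        (∫ τ in (0 : ℝ)..t, Real.exp (-ξ * (t - τ)) * r τ) / Real.sqrt ξ
      = (1 / Real.sqrt Real.pi) * ∫ τ in (0 : ℝ)..t, r τ / Real.sqrt (t - τ) := by
  simp only [intervalIntegral.integral_of_le ht]
  rw [integral_Ioi_integral_exp_neg_mul_sub_div_sqrt hr.measurable
    (integrableOn_div_sqrt_sub hr ht), ← mul_assoc]
  congr 1
  have hπ : √π ≠ 0 := (sqrt_pos.2 pi_pos).ne'
  field_simp
  exact sq_sqrt pi_pos.le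
end
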